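/- A finite simple graph is strongly chordal if and only if it has no chordless cycle on four vertices and every cycle on at least five vertices has an induced 2-chord triangle, i.e., a triangle formed by one edge of the cycle together with two chords of the cycle. -/

import Mathlib

/-- A cycle of length `n` in `G`, given as an injective map from `ZMod n`
whose consecutive images are adjacent. -/
def SimpleGraph.IsCycleEmb {V : Type*} (G : SimpleGraph V) {n : ℕ} (f : ZMod n → V) : Prop :=
  Function.Injective f ∧ ∀ i : ZMod n, G.Adj (f i) (f (i + 1))

/-- A chord of the cycle `f`: an edge of `G` joining two non-consecutive
vertices of the cycle. -/
def SimpleGraph.IsChordOf {V : Type*} (G : SimpleGraph V) {n : ℕ} (f : ZMod n → V)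
    (i j : ZMod n) : Prop :=
  G.Adj (f i) (f j) ∧ j ≠ i + 1 ∧ i ≠ j + 1

/-- A graph is chordal if every cycle of length at least 4 has a chord,
i.e. it has no chordless cycle of size 4 or more. -/
def SimpleGraph.Chordal {V : Type*} (G : SimpleGraph V) : Prop :=
  ∀ (n : ℕ), 4 ≤ n → ∀ f : ZMod n → V, G.IsCycleEmb f → ∃ i j, G.IsChordOf f i j

/-- A strong chord of the (even) cycle `f`: a chord joining two vertices whose
distance apart along the cycle is odd. -/
def SimpleGraph.IsStrongChordOf {V : Type*} (G : SimpleGraph V) {n : ℕ} (f : ZMod n → V)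
    (i j : ZMod n) : Prop :=
  G.IsChordOf f i j ∧ Odd (j - i).val

/-- A graph is strongly chordal if it is chordal and every even cycle of length
at least 6 has a strong chord. -/
def SimpleGraph.StronglyChordal {V : Type*} (G : SimpleGraph V) : Prop :=
  G.Chordal ∧ ∀ (n : ℕ), 6 ≤ n → Even n → ∀ f : ZMod n → V, G.IsCycleEmb f →
    ∃ i j, G.IsStrongChordOf f i j

/-- The closed neighborhood `N[v]` of a vertex `v`. -/
def SimpleGraph.closedNbhd {V : Type*} (G : SimpleGraph V) (v : V) : Set V :=
  insert v (G.neighborSet v)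

/-- A vertex is simplicial if its open neighborhood induces a clique. -/
def SimpleGraph.IsSimplicialVertex {V : Type*} (G : SimpleGraph V) (v : V) : Prop :=
  ∀ u w, G.Adj v u → G.Adj v w → u ≠ w → G.Adj u w

/-- A vertex is simple if the vertices in its closed neighborhood are pairwise
compatible, i.e. their closed neighborhoods are linearly ordered by inclusion. -/
def SimpleGraph.IsSimpleVertex {V : Type*} (G : SimpleGraph V) (v : V) : Prop :=
  ∀ u w, u ∈ G.closedNbhd v → w ∈ G.closedNbhd v →
    G.closedNbhd u ⊆ G.closedNbhd w ∨ G.closedNbhd w ⊆ G.closedNbhd u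

/-- A perfect elimination ordering: each `σ i` is simplicial in the subgraph of `G`
induced by the vertex set `{σ j : i ≤ j}`. -/
def SimpleGraph.IsPerfectElimOrdering {V : Type*} [Fintype V] (G : SimpleGraph V)
    (σ : Fin (Fintype.card V) ≃ V) : Prop :=
  ∀ i : Fin (Fintype.card V),
    (G.induce (σ '' {j | i ≤ j})).IsSimplicialVertex ⟨σ i, ⟨i, le_refl i, rfl⟩⟩

/-- A strong elimination ordering: for all `i < j` and `k < l`, if
`σ k, σ l ∈ N[σ i]` and `σ k ∈ N[σ j]`, then `σ l ∈ N[σ j]`. -/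
def SimpleGraph.IsStrongElimOrdering {V : Type*} [Fintype V] (G : SimpleGraph V)
    (σ : Fin (Fintype.card V) ≃ V) : Prop :=
  ∀ i j k l : Fin (Fintype.card V), i < j → k < l →
    σ k ∈ G.closedNbhd (σ i) → σ l ∈ G.closedNbhd (σ i) →
    σ k ∈ G.closedNbhd (σ j) → σ l ∈ G.closedNbhd (σ j)

/-!
A cycle of length at least five in a strongly chordal graph has a strong chord: for even length
by definition, and for odd length one of the two arcs cut off by any chord has odd length. Take a
strong chord `{f i, f j}` of minimal span `d = (j - i).val`. The arc `f i, …, f j` closed up by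
the chord is an even cycle of length `d + 1`; if `d ≥ 5`, a strong chord of it is a strong chord
of the original cycle of smaller span. Hence `d = 3`, and the chord of the 4-cycle
`f i, …, f (i + 3)` forms a 2-chord triangle with `{f i, f (i + 3)}`. Conversely, the chords from
`f j` to the ends of a cycle edge `{f i, f (i + 1)}` have consecutive spans, so one is strong.
-/

theorem ZMod.val_add_one_of_lt {n : ℕ} {a : ZMod n} (h : a.val + 1 < n) :
    (a + 1).val = a.val + 1 := by
  have hn : n ≠ 1 := by omega
  rw [ZMod.val_add_of_lt, ZMod.val_one'' hn]
  rwa [ZMod.val_one'' hn]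

namespace SimpleGraph

variable {V : Type*} {G : SimpleGraph V} {n : ℕ} {f : ZMod n → V}

def HasTwoChordTriangle (G : SimpleGraph V) (f : ZMod n → V) : Prop :=
  ∃ i j, G.IsChordOf f j i ∧ G.IsChordOf f j (i + 1)

theorem IsChordOf.symm {i j : ZMod n} (h : G.IsChordOf f i j) : G.IsChordOf f j i :=
  ⟨h.1.symm, h.2.2, h.2.1⟩

theorem IsChordOf.ne {i j : ZMod n} (h : G.IsChordOf f i j) : i ≠ j :=
  fun hij => h.1.ne (congrArg f hij)

theorem isChordOf_iff_of_val_lt [NeZero n] {a b : ZMod n} (hab : a.val < b.val) :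
    G.IsChordOf f a b ↔ G.Adj (f a) (f b) ∧ a.val + 2 ≤ b.val ∧ b.val + 2 ≤ n + a.val := by
  have hb := b.val_lt
  have ha1 : (a + 1).val = a.val + 1 := ZMod.val_add_one_of_lt (by omega)
  unfold IsChordOf
  rw [← (ZMod.val_injective n).ne_iff, ← (ZMod.val_injective n).ne_iff, ha1]
  rcases (show b.val + 1 < n ∨ b.val + 1 = n by omega) with hb1 | hb1
  · rw [ZMod.val_add_one_of_lt hb1]
    grind
  · rw [ZMod.val_add, ZMod.val_one'' (by omega), hb1, Nat.mod_self]
    grind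

theorem isChordOf_natCast_iff {a b : ℕ} (hab : a < b) (hbn : b < n) :
    G.IsChordOf f a b ↔ G.Adj (f a) (f b) ∧ a + 2 ≤ b ∧ b + 2 ≤ n + a := by
  have : NeZero n := ⟨by omega⟩
  have ha : (a : ZMod n).val = a := ZMod.val_cast_of_lt (hab.trans hbn)
  have hb : (b : ZMod n).val = b := ZMod.val_cast_of_lt hbn
  rw [isChordOf_iff_of_val_lt (by rwa [ha, hb]), ha, hb]

theorem IsChordOf.exists_val_lt [NeZero n] {i j : ZMod n} (h : G.IsChordOf f i j) :
    ∃ a b, G.IsChordOf f a b ∧ a.val < b.val := by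
  rcases lt_or_gt_of_ne (ZMod.val_injective n |>.ne h.ne) with hlt | hlt
  · exact ⟨i, j, h, hlt⟩
  · exact ⟨j, i, h.symm, hlt⟩

theorem IsStrongChordOf.symm [NeZero n] (hn : Even n) {i j : ZMod n}
    (h : G.IsStrongChordOf f i j) : G.IsStrongChordOf f j i := by
  have : NeZero (j - i) := ⟨sub_ne_zero.mpr h.1.ne.symm⟩
  refine ⟨h.1.symm, ?_⟩
  rw [← neg_sub, ZMod.val_neg_of_ne_zero]
  exact Nat.Even.sub_odd (j - i).val_lt.le hn h.2

theorem IsStrongChordOf.exists_val_lt [NeZero n] (hn : Even n) {i j : ZMod n}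
    (h : G.IsStrongChordOf f i j) : ∃ a b, G.IsStrongChordOf f a b ∧ a.val < b.val := by
  rcases lt_or_gt_of_ne (ZMod.val_injective n |>.ne h.1.ne) with hlt | hlt
  · exact ⟨i, j, h, hlt⟩
  · exact ⟨j, i, h.symm hn, hlt⟩

theorem IsCycleEmb.comp_add_left (hf : G.IsCycleEmb f) (p : ZMod n) :
    G.IsCycleEmb (fun k => f (p + k)) :=
  ⟨hf.1.comp (add_right_injective p), fun k => by simpa only [add_assoc] using hf.2 (p + k)⟩

theorem isChordOf_comp_add_left_iff {p i j : ZMod n} :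
    G.IsChordOf (fun k => f (p + k)) i j ↔ G.IsChordOf f (p + i) (p + j) := by
  simp only [IsChordOf, add_assoc, ne_eq, add_right_inj]

theorem isStrongChordOf_comp_add_left_iff {p i j : ZMod n} :
    G.IsStrongChordOf (fun k => f (p + k)) i j ↔ G.IsStrongChordOf f (p + i) (p + j) := by
  rw [IsStrongChordOf, IsStrongChordOf, isChordOf_comp_add_left_iff, add_sub_add_left_eq_sub]

theorem HasTwoChordTriangle.of_comp_add_left {p : ZMod n}
    (h : G.HasTwoChordTriangle (fun k => f (p + k))) : G.HasTwoChordTriangle f := by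
  obtain ⟨i, j, hi, hi'⟩ := h
  rw [isChordOf_comp_add_left_iff] at hi hi'
  exact ⟨p + i, p + j, hi, by rwa [add_assoc]⟩

theorem IsCycleEmb.arc (hf : G.IsCycleEmb f) {d : ℕ} (hdn : d < n) (hadj : G.Adj (f d) (f 0)) :
    G.IsCycleEmb (fun k : ZMod (d + 1) => f k.val) := by
  have hd : d ≠ 0 := by rintro rfl; exact hadj.ne (by simp)
  refine ⟨fun k l hkl => ZMod.val_injective _ ?_, fun k => ?_⟩
  · have hk := k.val_lt
    have hl := l.val_lt
    have := congrArg ZMod.val (hf.1 hkl)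
    rwa [ZMod.val_cast_of_lt (hk.trans_le hdn), ZMod.val_cast_of_lt (hl.trans_le hdn)] at this
  · rcases (show k.val + 1 < d + 1 ∨ k.val = d by have := k.val_lt; omega) with hk | hk
    · simpa [ZMod.val_add_one_of_lt hk] using hf.2 k.val
    · have : k + 1 = 0 := by
        rw [← ZMod.natCast_zmod_val k, hk]
        exact_mod_cast ZMod.natCast_self (d + 1)
      simpa [this, hk] using hadj

theorem IsChordOf.two_le_val_sub [NeZero n] {i j : ZMod n} (h : G.IsChordOf f i j) :
    2 ≤ (j - i).val := by
  have h0 : (j - i).val ≠ 0 := by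
    rw [Ne, ZMod.val_eq_zero, sub_eq_zero]
    exact h.ne.symm
  have h1 : (j - i).val ≠ 1 := fun h1 => h.2.1 <| by
    rw [← sub_add_cancel j i, ← ZMod.natCast_zmod_val (j - i), h1, Nat.cast_one, add_comm]
  omega

theorem IsChordOf.val_sub_add_val_sub [NeZero n] {i j : ZMod n} (h : G.IsChordOf f i j) :
    (j - i).val + (i - j).val = n := by
  have : NeZero (j - i) := ⟨sub_ne_zero.2 h.ne.symm⟩
  rw [← neg_sub j i, ZMod.val_neg_of_ne_zero]
  have := (j - i).val_lt
  omega

theorem IsChordOf.val_sub_add_two_le [NeZero n] {i j : ZMod n} (h : G.IsChordOf f i j) :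
    (j - i).val + 2 ≤ n := by
  have := h.symm.two_le_val_sub
  have := h.val_sub_add_val_sub
  omega

theorem IsChordOf.exists_isStrongChordOf [NeZero n] (hn : Odd n) {i j : ZMod n}
    (h : G.IsChordOf f i j) : ∃ i j, G.IsStrongChordOf f i j := by
  rcases (j - i).val.even_or_odd with he | ho
  · refine ⟨j, i, h.symm, ?_⟩
    have := h.val_sub_add_val_sub
    rw [Nat.odd_iff] at hn ⊢
    rw [Nat.even_iff] at he
    omega
  · exact ⟨i, j, h, ho⟩

theorem HasTwoChordTriangle.exists_isStrongChordOf [NeZero n]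
    (h : G.HasTwoChordTriangle f) : ∃ i j, G.IsStrongChordOf f i j := by
  obtain ⟨i, j, hi, hi'⟩ := h
  have hsucc : (i + 1 - j).val = (i - j).val + 1 := by
    rw [add_sub_right_comm]
    exact ZMod.val_add_one_of_lt (by have := hi.val_sub_add_two_le; omega)
  rcases (i - j).val.even_or_odd with he | ho
  · exact ⟨j, i + 1, hi', hsucc ▸ he.add_one⟩
  · exact ⟨j, i, hi, ho⟩

theorem Chordal.hasTwoChordTriangle_of_adj_three (hG : G.Chordal) (hf : G.IsCycleEmb f)
    (hn : 5 ≤ n) (hadj : G.Adj (f 0) (f 3)) : G.HasTwoChordTriangle f := by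
  have harc := hf.arc (d := 3) (by omega) (by simpa using hadj.symm)
  obtain ⟨u, v, huv⟩ := hG (3 + 1) le_rfl _ harc
  obtain ⟨a, b, hab, hlt⟩ := huv.exists_val_lt
  obtain ⟨hadj', hlo, hhi⟩ := (isChordOf_iff_of_val_lt hlt).1 hab
  have chord (x y : ℕ) (hxy : x + 2 ≤ y) (hy : y + 2 ≤ n + x) (hyn : y < n)
      (h : G.Adj (f x) (f y)) : G.IsChordOf f x y :=
    (isChordOf_natCast_iff (by omega) hyn).2 ⟨h, hxy, hy⟩
  have h03 : G.IsChordOf f (0 : ℕ) (3 : ℕ) :=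
    chord 0 3 (by omega) (by omega) (by omega) (by simpa using hadj)
  have hb4 := b.val_lt
  rcases (show a.val = 0 ∧ b.val = 2 ∨ a.val = 1 ∧ b.val = 3 by omega) with ⟨ha, hb⟩ | ⟨ha, hb⟩ <;>
    rw [ha, hb] at hadj'
  · refine ⟨(2 : ℕ), (0 : ℕ), chord 0 2 (by omega) (by omega) (by omega) hadj', ?_⟩
    convert h03 using 2
    push_cast
    norm_num
  · refine ⟨(0 : ℕ), (3 : ℕ), h03.symm, ?_⟩
    convert (chord 1 3 (by omega) (by omega) (by omega) hadj').symm using 2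
    simp

theorem StronglyChordal.exists_isStrongChordOf_val_sub_lt (hG : G.StronglyChordal)
    (hf : G.IsCycleEmb f) {d : ℕ} (hd : Odd d) (h5 : 5 ≤ d) (hdn : d + 2 ≤ n)
    (hadj : G.Adj (f 0) (f d)) : ∃ i j, G.IsStrongChordOf f i j ∧ (j - i).val < d := by
  have harc := hf.arc (by omega) hadj.symm
  obtain ⟨u, v, huv⟩ := hG.2 (d + 1) (by omega) hd.add_one _ harc
  obtain ⟨a, b, ⟨hab, hodd⟩, hlt⟩ := huv.exists_val_lt hd.add_one
  obtain ⟨hadj', hlo, hhi⟩ := (isChordOf_iff_of_val_lt hlt).1 hab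
  rw [ZMod.val_sub hlt.le] at hodd
  have hbn : b.val < n := by have := b.val_lt; omega
  have hspan : ((b.val : ZMod n) - a.val).val = b.val - a.val := by
    rw [← Nat.cast_sub hlt.le, ZMod.val_cast_of_lt (by omega)]
  exact ⟨a.val, b.val, ⟨(isChordOf_natCast_iff hlt hbn).2 ⟨hadj', hlo, by omega⟩, hspan ▸ hodd⟩,
    by omega⟩

theorem StronglyChordal.hasTwoChordTriangle_of_isStrongChordOf [NeZero n]
    (hG : G.StronglyChordal) (hf : G.IsCycleEmb f) {i j : ZMod n}
    (h : G.IsStrongChordOf f i j) : G.HasTwoChordTriangle f := by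
  induction hd : (j - i).val using Nat.strong_induction_on generalizing i j with
  | _ d ih =>
  have hdn := hd ▸ h.1.val_sub_add_two_le
  have hodd := hd ▸ h.2
  have hadj : G.Adj (f (i + 0)) (f (i + d)) := by
    rw [← hd, ZMod.natCast_zmod_val, add_sub_cancel, add_zero]
    exact h.1.1
  rcases (show d = 3 ∨ 5 ≤ d by have := hd ▸ h.1.two_le_val_sub; rw [Nat.odd_iff] at hodd; omega)
    with rfl | h5
  · exact (hG.1.hasTwoChordTriangle_of_adj_three (hf.comp_add_left i) (by omega)
      (by exact_mod_cast hadj)).of_comp_add_left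
  · obtain ⟨a, b, hab, hlt⟩ :=
      hG.exists_isStrongChordOf_val_sub_lt (hf.comp_add_left i) hodd h5 hdn hadj
    rw [isStrongChordOf_comp_add_left_iff] at hab
    exact ih _ (by rwa [add_sub_add_left_eq_sub]) hab rfl

theorem StronglyChordal.hasTwoChordTriangle (hG : G.StronglyChordal) (hf : G.IsCycleEmb f)
    (hn : 5 ≤ n) : G.HasTwoChordTriangle f := by
  have : NeZero n := ⟨by omega⟩
  obtain ⟨i, j, h⟩ : ∃ i j, G.IsStrongChordOf f i j := by
    rcases n.even_or_odd with he | ho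
    · exact hG.2 n (by obtain ⟨k, rfl⟩ := he; omega) he f hf
    · obtain ⟨i, j, hc⟩ := hG.1 n (by omega) f hf
      exact hc.exists_isStrongChordOf ho
  exact hG.hasTwoChordTriangle_of_isStrongChordOf hf h

end SimpleGraph

theorem stronglyChordal_iff_two_chord_triangle_general {V : Type*} (G : SimpleGraph V) :
    G.StronglyChordal ↔
      (∀ f : ZMod 4 → V, G.IsCycleEmb f → ∃ i j, G.IsChordOf f i j) ∧
      (∀ (n : ℕ), 5 ≤ n → ∀ f : ZMod n → V, G.IsCycleEmb f →
        ∃ i j : ZMod n, G.IsChordOf f j i ∧ G.IsChordOf f j (i + 1)) := by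
  refine ⟨fun hG => ⟨fun f hf => hG.1 4 le_rfl f hf,
    fun n hn f hf => hG.hasTwoChordTriangle hf hn⟩, ?_⟩
  rintro ⟨h4, h5⟩
  refine ⟨fun n hn f hf => ?_, fun n hn _ f hf => ?_⟩
  · rcases hn.eq_or_lt with rfl | hn
    · exact h4 f hf
    · obtain ⟨i, j, hi, -⟩ := h5 n hn f hf
      exact ⟨j, i, hi⟩
  · have : NeZero n := ⟨by omega⟩
    exact SimpleGraph.HasTwoChordTriangle.exists_isStrongChordOf (h5 n (by omega) f hf)

/-- A finite simple graph is strongly chordal iff it has no chordless cycle on four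
vertices and every cycle on at least five vertices has an induced 2-chord triangle:
a triangle formed by one edge `{f i, f (i+1)}` of the cycle together with two chords
from a third vertex `f j` of the cycle. -/
theorem stronglyChordal_iff_two_chord_triangle {V : Type*} [Fintype V] (G : SimpleGraph V) :
    G.StronglyChordal ↔
      (∀ f : ZMod 4 → V, G.IsCycleEmb f → ∃ i j, G.IsChordOf f i j) ∧
      (∀ (n : ℕ), 5 ≤ n → ∀ f : ZMod n → V, G.IsCycleEmb f →
        ∃ i j : ZMod n, G.IsChordOf f j i ∧ G.IsChordOf f j (i + 1)) :=
  stronglyChordal_iff_two_chord_triangle_general G
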